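/- Let h = sqrt((M₁²−M₂²+α₃²)² + 4M₁²M₂²) and define the Chaplygin variables q_{1,2} = (M₁²+M₂² ± h)/α₃². Then at every point with α₃ ≠ 0, h ≠ 0, and α₁M₁+α₂M₂+α₃M₃ = 0, the Poisson bracket {q₁,q₂} with respect to the e*(3) Lie–Poisson bracket vanishes. -/

import Mathlib

/-- Phase space ℝ⁶ with coordinates (M₁,M₂,M₃,α₁,α₂,α₃) = (x 0,…,x 5). -/
abbrev V6 := Fin 6 → ℝ

/-- Partial derivative of `f` in the `i`-th coordinate direction at `x`. -/
noncomputable def pd (f : V6 → ℝ) (i : Fin 6) (x : V6) : ℝ :=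
  fderiv ℝ f x (Pi.single i 1)

/-- Index of M_i among the 6 coordinates. -/
def Mi (i : Fin 3) : Fin 6 := ⟨i.1, by omega⟩
/-- Index of α_i among the 6 coordinates. -/
def Ai (i : Fin 3) : Fin 6 := ⟨i.1 + 3, by omega⟩

/-- Levi-Civita symbol on {0,1,2}. -/
noncomputable def eps (i j k : Fin 3) : ℝ :=
  ((((i.1 : ℤ) - j.1) * ((j.1 : ℤ) - k.1) * ((k.1 : ℤ) - i.1) : ℤ) : ℝ) / 2

/-- The e*(3) Lie–Poisson bracket:
{f,g} = Σ ε_{ijk} ( M_k ∂f/∂M_i ∂g/∂M_j + α_k (∂f/∂M_i ∂g/∂α_j + ∂f/∂α_i ∂g/∂M_j) ). -/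
noncomputable def pb (f g : V6 → ℝ) (x : V6) : ℝ :=
  ∑ i : Fin 3, ∑ j : Fin 3, ∑ k : Fin 3, eps i j k *
    ( x (Mi k) * pd f (Mi i) x * pd g (Mi j) x
      + x (Ai k) * (pd f (Mi i) x * pd g (Ai j) x + pd f (Ai i) x * pd g (Mi j) x) )

/-- h = sqrt((M₁²−M₂²+α₃²)² + 4M₁²M₂²). -/
noncomputable def hC : V6 → ℝ := fun x =>
  Real.sqrt (((x 0)^2 - (x 1)^2 + (x 5)^2)^2 + 4*(x 0)^2*(x 1)^2)

/-- Chaplygin variable q₁ = (M₁²+M₂²+h)/α₃². -/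
noncomputable def q1 : V6 → ℝ := fun x => ((x 0)^2 + (x 1)^2 + hC x) / (x 5)^2
/-- Chaplygin variable q₂ = (M₁²+M₂²−h)/α₃². -/
noncomputable def q2 : V6 → ℝ := fun x => ((x 0)^2 + (x 1)^2 - hC x) / (x 5)^2

/-!
Put u = (M₁/α₃)² and v = (M₂/α₃)². Where α₃ ≠ 0 one has h/α₃² = √((u - v + 1)² + 4uv), so
q₁,₂ = u + v ± √((u - v + 1)² + 4uv) are smooth functions of (u, v) as long as h ≠ 0. Since the
bracket is a skew bilinear form in the differentials, the chain rule gives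
{q₁, q₂} = (Jacobian of (q₁, q₂) in (u, v)) · {u, v}, and a direct computation gives
{u, v} = 4 M₁ M₂ α₃⁻⁵ (α₁M₁ + α₂M₂ + α₃M₃), which vanishes on the zero level of the Casimir.
-/

open Filter Topology

/-- `M · (a_M × b_M) + α · (a_M × b_α + a_α × b_M)`, for covectors `a = (a_M, a_α)`, `b = (b_M, b_α)`. -/
def poissonForm (x a b : V6) : ℝ :=
  x 0 * (a 1 * b 2 - a 2 * b 1) + x 1 * (a 2 * b 0 - a 0 * b 2) + x 2 * (a 0 * b 1 - a 1 * b 0)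
    + x 3 * (a 1 * b 5 - a 2 * b 4 + a 4 * b 2 - a 5 * b 1)
    + x 4 * (a 2 * b 3 - a 0 * b 5 + a 5 * b 0 - a 3 * b 2)
    + x 5 * (a 0 * b 4 - a 1 * b 3 + a 3 * b 1 - a 4 * b 0)

theorem pb_eq_poissonForm (f g : V6 → ℝ) (x : V6) :
    pb f g x = poissonForm x (fun i => pd f i x) (fun i => pd g i x) := by
  simp only [pb, poissonForm, Fin.sum_univ_three, eps, Mi, Ai, Fin.isValue, Fin.val_zero, Fin.val_one,
    Fin.val_two, Nat.reduceAdd, Fin.reduceFinMk]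
  push_cast
  ring

theorem pb_congr {f f' g g' : V6 → ℝ} {x : V6} (hf : f =ᶠ[𝓝 x] f') (hg : g =ᶠ[𝓝 x] g') :
    pb f g x = pb f' g' x := by
  simp only [pb, pd, hf.fderiv_eq, hg.fderiv_eq]

theorem poissonForm_smul_add_smul (x a b : V6) (c₁ c₂ d₁ d₂ : ℝ) :
    poissonForm x (c₁ • a + c₂ • b) (d₁ • a + d₂ • b) = (c₁ * d₂ - c₂ * d₁) * poissonForm x a b := by
  simp only [poissonForm, Pi.add_apply, Pi.smul_apply, smul_eq_mul]
  ring

theorem fderiv_comp_prod {E : Type*} [NormedAddCommGroup E] [NormedSpace ℝ E]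
    {φ : ℝ × ℝ → ℝ} {u v : E → ℝ} {x : E} (hφ : DifferentiableAt ℝ φ (u x, v x))
    (hu : DifferentiableAt ℝ u x) (hv : DifferentiableAt ℝ v x) :
    fderiv ℝ (fun y => φ (u y, v y)) x =
      fderiv ℝ φ (u x, v x) (1, 0) • fderiv ℝ u x + fderiv ℝ φ (u x, v x) (0, 1) • fderiv ℝ v x := by
  have hcomp : HasFDerivAt (fun y => φ (u y, v y)) _ x :=
    hφ.hasFDerivAt.comp x (hu.hasFDerivAt.prodMk hv.hasFDerivAt)
  rw [hcomp.fderiv]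
  ext w
  have hw : (fderiv ℝ u x w, fderiv ℝ v x w) =
      fderiv ℝ u x w • ((1 : ℝ), (0 : ℝ)) + fderiv ℝ v x w • ((0 : ℝ), (1 : ℝ)) := by
    simp only [Prod.smul_mk, smul_eq_mul, mul_one, mul_zero, Prod.mk_add_mk, add_zero, zero_add]
  simp only [ContinuousLinearMap.comp_apply, ContinuousLinearMap.prod_apply, hw, map_add, map_smul,
    add_apply, smul_apply, smul_eq_mul, mul_comm]

theorem pb_comp_prod {φ ψ : ℝ × ℝ → ℝ} {u v : V6 → ℝ} {x : V6}
    (hφ : DifferentiableAt ℝ φ (u x, v x)) (hψ : DifferentiableAt ℝ ψ (u x, v x))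
    (hu : DifferentiableAt ℝ u x) (hv : DifferentiableAt ℝ v x) :
    pb (fun y => φ (u y, v y)) (fun y => ψ (u y, v y)) x =
      (fderiv ℝ φ (u x, v x) (1, 0) * fderiv ℝ ψ (u x, v x) (0, 1)
        - fderiv ℝ φ (u x, v x) (0, 1) * fderiv ℝ ψ (u x, v x) (1, 0)) * pb u v x := by
  have hpd {χ : ℝ × ℝ → ℝ} (hχ : DifferentiableAt ℝ χ (u x, v x)) :
      (fun i => pd (fun y => χ (u y, v y)) i x) =
        fderiv ℝ χ (u x, v x) (1, 0) • (fun i => pd u i x)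
          + fderiv ℝ χ (u x, v x) (0, 1) • (fun i => pd v i x) := by
    ext i
    simp only [pd, fderiv_comp_prod hχ hu hv, add_apply, smul_apply, Pi.add_apply, Pi.smul_apply]
  rw [pb_eq_poissonForm, hpd hφ, hpd hψ, poissonForm_smul_add_smul, pb_eq_poissonForm]

noncomputable def sqRatio (i : Fin 6) (y : V6) : ℝ := (y i / y 5) ^ 2

theorem hasFDerivAt_sqRatio (i : Fin 6) {x : V6} (h5 : x 5 ≠ 0) :
    HasFDerivAt (sqRatio i)
      ((2 * x i / x 5 ^ 2) • (ContinuousLinearMap.proj i : V6 →L[ℝ] ℝ)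
        - (2 * x i ^ 2 / x 5 ^ 3) • (ContinuousLinearMap.proj 5 : V6 →L[ℝ] ℝ)) x := by
  have hproj (j : Fin 6) : HasFDerivAt (fun y : V6 => y j) (ContinuousLinearMap.proj j : V6 →L[ℝ] ℝ) x :=
    hasFDerivAt_apply j x
  have hinv : HasFDerivAt (fun y : V6 => (y 5)⁻¹) _ x := (hasDerivAt_inv h5).comp_hasFDerivAt x (hproj 5)
  have hsq : HasFDerivAt (fun y : V6 => (y i * (y 5)⁻¹) ^ 2) _ x := ((hproj i).mul hinv).pow 2
  unfold sqRatio
  simp only [div_eq_mul_inv]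
  refine hsq.congr_fderiv ?_
  ext w
  simp only [Pi.mul_apply, Nat.add_one_sub_one, pow_one, nsmul_eq_mul, neg_smul, smul_neg, smul_add,
    add_apply, neg_apply, sub_apply, smul_apply, ContinuousLinearMap.proj_apply, smul_eq_mul]
  field_simp
  ring

theorem pb_sqRatio_zero_one {x : V6} (h5 : x 5 ≠ 0) :
    pb (sqRatio 0) (sqRatio 1) x = 4 * x 0 * x 1 / x 5 ^ 5 * (x 3 * x 0 + x 4 * x 1 + x 5 * x 2) := by
  simp only [pb_eq_poissonForm, poissonForm, pd, (hasFDerivAt_sqRatio 0 h5).fderiv,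
    (hasFDerivAt_sqRatio 1 h5).fderiv, sub_apply, smul_apply, ContinuousLinearMap.proj_apply,
    Pi.single_apply, Fin.isValue, Fin.reduceEq, ↓reduceIte, smul_eq_mul]
  field_simp
  ring

noncomputable def chaplyginDisc (p : ℝ × ℝ) : ℝ := (p.1 - p.2 + 1) ^ 2 + 4 * p.1 * p.2

noncomputable def chaplyginRoot (s : ℝ) (p : ℝ × ℝ) : ℝ := p.1 + p.2 + s * √(chaplyginDisc p)

theorem differentiableAt_chaplyginRoot (s : ℝ) {p : ℝ × ℝ} (hp : chaplyginDisc p ≠ 0) :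
    DifferentiableAt ℝ (chaplyginRoot s) p := by
  have hd : DifferentiableAt ℝ chaplyginDisc p := by unfold chaplyginDisc; fun_prop
  unfold chaplyginRoot
  fun_prop (disch := exact hp)

theorem hC_div_sq {y : V6} (h5 : y 5 ≠ 0) :
    hC y / y 5 ^ 2 = √(chaplyginDisc (sqRatio 0 y, sqRatio 1 y)) := by
  set A := (y 0 ^ 2 - y 1 ^ 2 + y 5 ^ 2) ^ 2 + 4 * y 0 ^ 2 * y 1 ^ 2
  calc hC y / y 5 ^ 2 = √A / √((y 5 ^ 2) ^ 2) := by rw [Real.sqrt_sq (by positivity)]; rfl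
    _ = √(A / (y 5 ^ 2) ^ 2) := (Real.sqrt_div (by positivity) _).symm
    _ = √(chaplyginDisc (sqRatio 0 y, sqRatio 1 y)) := by
      congr 1
      simp only [A, chaplyginDisc, sqRatio]
      field_simp

theorem chaplyginDisc_ne_zero {x : V6} (h5 : x 5 ≠ 0) (hh : hC x ≠ 0) :
    chaplyginDisc (sqRatio 0 x, sqRatio 1 x) ≠ 0 := by
  have hsqrt : √(chaplyginDisc (sqRatio 0 x, sqRatio 1 x)) ≠ 0 := by
    rw [← hC_div_sq h5]
    exact div_ne_zero hh (pow_ne_zero 2 h5)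
  exact fun h0 => hsqrt (by rw [h0, Real.sqrt_zero])

theorem eventuallyEq_chaplyginRoot {x : V6} (h5 : x 5 ≠ 0) {s : ℝ} {q : V6 → ℝ}
    (hq : ∀ y : V6, q y = (y 0 ^ 2 + y 1 ^ 2 + s * hC y) / y 5 ^ 2) :
    q =ᶠ[𝓝 x] fun y => chaplyginRoot s (sqRatio 0 y, sqRatio 1 y) := by
  filter_upwards [(continuous_apply 5).continuousAt.eventually_ne h5] with y hy
  rw [hq, chaplyginRoot, ← hC_div_sq hy, sqRatio, sqRatio]
  field_simp

/-- The Chaplygin variables commute on the zero level of the Casimir. -/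
theorem chaplygin_commute (x : V6) (h5 : x 5 ≠ 0) (hh : hC x ≠ 0)
    (hcas : x 3 * x 0 + x 4 * x 1 + x 5 * x 2 = 0) :
    pb q1 q2 x = 0 := by
  have hdisc := chaplyginDisc_ne_zero h5 hh
  have hq1 := eventuallyEq_chaplyginRoot h5 (q := q1) (s := 1) (fun y => by simp [q1])
  have hq2 := eventuallyEq_chaplyginRoot h5 (q := q2) (s := -1) (fun y => by simp [q2, sub_eq_add_neg])
  rw [pb_congr hq1 hq2, pb_comp_prod (differentiableAt_chaplyginRoot 1 hdisc)
    (differentiableAt_chaplyginRoot (-1) hdisc) (hasFDerivAt_sqRatio 0 h5).differentiableAt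
    (hasFDerivAt_sqRatio 1 h5).differentiableAt, pb_sqRatio_zero_one h5, hcas, mul_zero, mul_zero]
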